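/- The coproduct Δ_{≥1} on the MZV shuffle Hopf algebra H_{≥1} equals the pullback of the dual shuffle coproduct under the Riemann duality map: Δ_{≥1} = (φ^{−1}⊗φ^{−1}) ∘ ⧢_{≤0}* ∘ φ, where φ([s_1,...,s_k]) = [1−s_1,...,1−s_k]* and φ(1) = 1*. Equivalently, (φ⊗φ)Δ_{≥1} = ⧢_{≤0}* φ, so φ is a coalgebra isomorphism (H_{≥1}, Δ_{≥1}, ε_{≥1}) → (H_{≤0}^✻, ⧢_{≤0}*, u_{≤0}*). -/

import Mathlib

open Finsupp TensorProduct

noncomputable section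

/-- The underlying space of the extended shuffle algebra: formal ℚ-linear
combinations of words (lists of integers); the empty word is the unit `1`. -/
abbrev W : Type := List ℤ →₀ ℚ

/-- The basis word `[s₁,…,s_k]` (the empty list is the unit `1`). -/
def wd (l : List ℤ) : W := Finsupp.single l 1

/-- A word has all entries nonpositive. -/
def NP (l : List ℤ) : Prop := ∀ a ∈ l, a ≤ 0

/-- A word has all entries positive. -/
def Pos (l : List ℤ) : Prop := ∀ a ∈ l, 1 ≤ a

/-- The operator `J : 1 ↦ 0, [s₁,s₂,…] ↦ [s₁-1,s₂,…]`. -/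
def Jop : W →ₗ[ℚ] W :=
  Finsupp.lsum ℚ fun l => match l with
    | [] => (0 : ℚ →ₗ[ℚ] W)
    | a :: s => Finsupp.lsingle ((a - 1) :: s)

/-- Prepending `a` to every word: `[a, w]`. -/
def pre (a : ℤ) : W →ₗ[ℚ] W := Finsupp.lmapDomain ℚ ℚ (List.cons a)

/-- Characterization of the extended shuffle product on `H_ℤ`. -/
structure IsExtShuffle (sh : W →ₗ[ℚ] W →ₗ[ℚ] W) : Prop where
  assoc : ∀ x y z : W, sh (sh x y) z = sh x (sh y z)
  one_mul : ∀ x : W, sh (wd []) x = x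
  mul_one : ∀ x : W, sh x (wd []) = x
  zero_mul_word : ∀ s : List ℤ, sh (wd [0]) (wd s) = wd (0 :: s)
  word_mul_zero : ∀ (a : ℤ) (s : List ℤ), 0 < a → sh (wd (a :: s)) (wd [0]) = wd (0 :: a :: s)
  leibniz : ∀ x y : W, Jop (sh x y) = sh (Jop x) y + sh x (Jop y)
  graded : ∀ s t l : List ℤ, l.length ≠ s.length + t.length → sh (wd s) (wd t) l = 0

/-- The operator `J_{≥1}`. -/
def J1 : W →ₗ[ℚ] W :=
  Finsupp.lsum ℚ fun l => match l with
    | [] => (0 : ℚ →ₗ[ℚ] W)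
    | a :: s => if a = 1 then 0 else Finsupp.lsingle ((a - 1) :: s)

/-- The operator `δ_i`. -/
def del (i : ℕ) : W →ₗ[ℚ] W :=
  Finsupp.lsum ℚ fun l =>
    if i ≤ l.length then
      ∑ j ∈ Finset.range i, ((l.getD j 0 : ℤ) : ℚ) • Finsupp.lsingle (l.set j (l.getD j 0 + 1))
    else 0

def delZ (i : ℤ) : W →ₗ[ℚ] W := if 0 < i then del i.toNat else 0

/-- The shifted tensor `A ⊗̂ δ_i`. -/
def shiftT (A : W →ₗ[ℚ] W) (i : ℕ) : W ⊗[ℚ] W →ₗ[ℚ] W ⊗[ℚ] W :=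
  TensorProduct.lift <| Finsupp.lsum ℚ fun s =>
    LinearMap.toSpanSingleton ℚ (W →ₗ[ℚ] W ⊗[ℚ] W)
      ((TensorProduct.mk ℚ W W (A (wd s))) ∘ₗ delZ ((i : ℤ) - s.length))

/-- The counit. -/
def eps : W →ₗ[ℚ] ℚ :=
  Finsupp.lsum ℚ fun l => if l = [] then LinearMap.id else 0

/-- The grading degree `n - (s₁+⋯+s_n)` on words with nonpositive entries. -/
def gdeg (l : List ℤ) : ℤ := l.length - l.sum

/-- The componentwise product on `W ⊗ W`. -/
def shT (sh : W →ₗ[ℚ] W →ₗ[ℚ] W) : W ⊗[ℚ] W →ₗ[ℚ] W ⊗[ℚ] W →ₗ[ℚ] W ⊗[ℚ] W :=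
  TensorProduct.lift (LinearMap.compl₂ ((TensorProduct.mapBilinear (RingHom.id ℚ) W W W W).comp sh) sh)

/-- Characterization of the coproduct `Δ_{≤0}`. -/
structure IsDle0 (sh : W →ₗ[ℚ] W →ₗ[ℚ] W) (D : W →ₗ[ℚ] W ⊗[ℚ] W) : Prop where
  one : D (wd []) = wd [] ⊗ₜ[ℚ] wd []
  zero : D (wd [0]) = wd [] ⊗ₜ[ℚ] wd [0] + wd [0] ⊗ₜ[ℚ] wd []
  coder : ∀ l : List ℤ, NP l → D (Jop (wd l)) =
      ((TensorProduct.map LinearMap.id Jop + TensorProduct.map Jop LinearMap.id :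
        W ⊗[ℚ] W →ₗ[ℚ] W ⊗[ℚ] W)) (D (wd l))
  zeroCons : ∀ l : List ℤ, NP l → D (wd (0 :: l)) = shT sh (D (wd [0])) (D (wd l))

/-- The pairing realizing the Riemann duality map `φ`:
`phiPair x y = (φ x)(y)`, with `φ([s₁,…,s_k]) = [1-s₁,…,1-s_k]*`. -/
def phiPair : W →ₗ[ℚ] W →ₗ[ℚ] ℚ :=
  Finsupp.lsum ℚ fun l =>
    LinearMap.toSpanSingleton ℚ (W →ₗ[ℚ] ℚ) (Finsupp.lapply (l.map fun a => 1 - a))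

/-- `pairT f g` evaluates a tensor against a pair of linear functionals. -/
def pairT (f g : W →ₗ[ℚ] ℚ) : W ⊗[ℚ] W →ₗ[ℚ] ℚ :=
  TensorProduct.lift ((LinearMap.mul ℚ ℚ).compl₁₂ f g)

/-- The transpose of the dual operator `δ̃_m` (with `δ̃_m = 0` for `m ≤ 0`). -/
def tT (m : ℤ) : W →ₗ[ℚ] W :=
  Finsupp.lsum ℚ fun l =>
    if 0 < m ∧ m ≤ (l.length : ℤ) then
      ∑ j ∈ Finset.range m.toNat,
        ((-(l.getD j 0) : ℤ) : ℚ) • Finsupp.lsingle (l.set j (l.getD j 0 + 1))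
    else 0


/-! ### Auxiliary development -/

section Aux

/-- `φ` on words. -/
def fw (l : List ℤ) : List ℤ := l.map fun a => 1 - a

@[simp] lemma length_fw (l : List ℤ) : (fw l).length = l.length := List.length_map ..

lemma set_getD_self {l : List ℤ} {i : ℕ} (h : i < l.length) :
    l.set i (l.getD i 0) = l := by
  apply List.ext_getElem (by simp)
  intro j h1 h2
  rw [List.getElem_set]
  split
  · next heq => subst heq; exact (List.getD_eq_getElem l 0 h2)
  · rfl

lemma getD_set_self {l : List ℤ} {i : ℕ} (h : i < l.length) (x : ℤ) :
    (l.set i x).getD i 0 = x := by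
  rw [List.getD_eq_getElem (l.set i x) 0 (by simpa using h)]
  simp

lemma getD_set_ne {l : List ℤ} {i j : ℕ} (h : i ≠ j) (x : ℤ) :
    (l.set i x).getD j 0 = l.getD j 0 := by
  by_cases hj : j < l.length
  · rw [List.getD_eq_getElem (l.set i x) 0 (by simpa using hj),
      List.getD_eq_getElem l 0 hj, List.getElem_set_ne h]
  · rw [List.getD_eq_default _ _ (show (l.set i x).length ≤ j by simpa using not_lt.mp hj),
      List.getD_eq_default _ _ (not_lt.mp hj)]

lemma sum_set : ∀ (l : List ℤ) (n : ℕ), n < l.length → ∀ x : ℤ,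
    (l.set n x).sum = l.sum - l.getD n 0 + x
  | a :: t, 0, _, x => by simp [add_comm, add_sub_cancel_right]
  | a :: t, n+1, h, x => by
      have := sum_set t n (by simpa using Nat.lt_of_succ_lt_succ h) x
      simp only [List.set_cons_succ, List.sum_cons, this, List.getD_cons_succ]
      ring

lemma wext {M : Type*} [AddCommMonoid M] [Module ℚ M] {f g : W →ₗ[ℚ] M}
    (h : ∀ l, f (wd l) = g (wd l)) : f = g :=
  Finsupp.lhom_ext' fun l => LinearMap.ext_ring (h l)

lemma wd_apply (l r : List ℤ) : (wd l) r = if l = r then 1 else 0 := Finsupp.single_apply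

@[simp] lemma phiPair_wd (l : List ℤ) (y : W) : phiPair (wd l) y = y (fw l) := by
  simp [phiPair, wd, fw]

lemma phiPair_ww (l w : List ℤ) : phiPair (wd l) (wd w) = if w = fw l then 1 else 0 := by
  rw [phiPair_wd, wd_apply]

lemma Jop_nil : Jop (wd []) = 0 := by simp [Jop, wd]

lemma Jop_cons (a : ℤ) (s : List ℤ) : Jop (wd (a :: s)) = wd ((a - 1) :: s) := by
  simp [Jop, wd]

lemma pre_wd (a : ℤ) (l : List ℤ) : pre a (wd l) = wd (a :: l) := by
  simp [pre, wd, Finsupp.lmapDomain_apply, Finsupp.mapDomain_single]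

lemma eps_wd (s : List ℤ) : eps (wd s) = if s = [] then 1 else 0 := by
  by_cases h : s = [] <;> simp [eps, wd, h]

lemma del_wd (i : ℕ) (l : List ℤ) : del i (wd l) =
    if i ≤ l.length then
      ∑ j ∈ Finset.range i, ((l.getD j 0 : ℤ) : ℚ) • wd (l.set j (l.getD j 0 + 1))
    else 0 := by
  by_cases h : i ≤ l.length <;> simp [del, wd, h]

lemma tT_wd (m : ℤ) (l : List ℤ) : tT m (wd l) =
    if 0 < m ∧ m ≤ (l.length : ℤ) then
      ∑ j ∈ Finset.range m.toNat, ((-(l.getD j 0) : ℤ) : ℚ) • wd (l.set j (l.getD j 0 + 1))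
    else 0 := by
  by_cases h : 0 < m ∧ m ≤ (l.length : ℤ) <;> simp [tT, wd, h]

/-- Projection onto words of length `≥ m`. -/
def proj (m : ℤ) : W →ₗ[ℚ] W :=
  Finsupp.lsum ℚ fun l => if 0 < m ∧ m ≤ (l.length : ℤ) then Finsupp.lsingle l else 0

lemma proj_wd (m : ℤ) (l : List ℤ) :
    proj m (wd l) = if 0 < m ∧ m ≤ (l.length : ℤ) then wd l else 0 := by
  by_cases h : 0 < m ∧ m ≤ (l.length : ℤ) <;> simp [proj, wd, h]

lemma delZ_coe (i : ℕ) (h : 0 < i) : delZ (i : ℤ) = del i := by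
  simp [delZ, h]

end Aux
section Aux2

lemma fw_set (l : List ℤ) (j : ℕ) (x : ℤ) : fw (l.set j x) = (fw l).set j (1 - x) := by
  simp [fw, List.map_set]

lemma getD_fw {l : List ℤ} {j : ℕ} (h : j < l.length) :
    (fw l).getD j 0 = 1 - l.getD j 0 := by
  rw [List.getD_eq_getElem _ 0 (by simpa using h), List.getD_eq_getElem _ 0 h]
  simp [fw]

lemma length_eq_of_fw {w l : List ℤ} (h : w = fw l) : w.length = l.length := by
  subst h; simp

lemma trans_word (m : ℤ) (s w : List ℤ) :
    phiPair (delZ m (wd s)) (wd w) = phiPair (wd s) (tT m (wd w)) := by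
  by_cases hm : 0 < m
  · rw [delZ, if_pos hm, del_wd, tT_wd]
    have hmn : (m.toNat : ℤ) = m := Int.toNat_of_nonneg hm.le
    by_cases hs : m.toNat ≤ s.length
    · rw [if_pos hs]
      by_cases hw : m ≤ (w.length : ℤ)
      · have hlen : w.length = s.length → True := fun _ => trivial
        rw [if_pos ⟨hm, hw⟩]
        rw [map_sum, map_sum]
        simp only [map_smul, LinearMap.smul_apply, map_sum, LinearMap.sum_apply]
        apply Finset.sum_congr rfl
        intro j hj
        rw [Finset.mem_range] at hj
        have hjs : j < s.length := lt_of_lt_of_le hj hs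
        have hjw : j < w.length := by
          have : (j : ℤ) < m := by omega
          omega
        rw [phiPair_ww, phiPair_wd, wd_apply]
        by_cases h : w = fw (s.set j (s.getD j 0 + 1))
        · rw [if_pos h]
          have hwj : w.getD j 0 = -(s.getD j 0) := by
            rw [h, fw_set, getD_set_self (by simpa using hjs)]
            ring
          have hind : w.set j (w.getD j 0 + 1) = fw s := by
            rw [h, fw_set, getD_set_self (by simpa using hjs), List.set_set]
            have e : (1 : ℤ) - (s.getD j 0 + 1) + 1 = 1 - s.getD j 0 := by ring
            rw [e, ← getD_fw hjs, set_getD_self (by simpa using hjs)]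
          rw [if_pos hind, hwj]
          push_cast
          ring
        · rw [if_neg h]
          have hind : ¬ (w.set j (w.getD j 0 + 1) = fw s) := by
            intro hc
            apply h
            have hwl : w.length = s.length := by
              have := congrArg List.length hc
              simpa using this
            have hwj : w.getD j 0 = -(s.getD j 0) := by
              have := congrArg (fun t => t.getD j 0) hc
              rw [getD_set_self (by omega) , getD_fw hjs] at this
              omega
            have : w = (fw s).set j (w.getD j 0) := by
              have h1 : (w.set j (w.getD j 0 + 1)).set j (w.getD j 0) = w.set j (w.getD j 0) := List.set_set ..
              rw [set_getD_self (by omega)] at h1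
              calc w = (w.set j (w.getD j 0 + 1)).set j (w.getD j 0) := h1.symm
                _ = (fw s).set j (w.getD j 0) := by rw [hc]
            rw [fw_set]
            have e : (1 : ℤ) - (s.getD j 0 + 1) = w.getD j 0 := by omega
            rw [e]
            exact this
          rw [if_neg hind]
          simp
      · rw [if_neg (by tauto)]
        rw [map_zero, map_sum]
        simp only [map_smul, LinearMap.sum_apply, LinearMap.smul_apply, LinearMap.zero_apply]
        apply Finset.sum_eq_zero
        intro j hj
        rw [phiPair_ww, if_neg, smul_zero]
        intro hc
        have := length_eq_of_fw hc
        simp only [List.length_set] at this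
        omega
    · rw [if_neg hs, map_zero, LinearMap.zero_apply]
      by_cases hw : m ≤ (w.length : ℤ)
      · rw [if_pos ⟨hm, hw⟩, map_sum]
        symm
        apply Finset.sum_eq_zero
        intro j hj
        rw [map_smul, phiPair_wd, wd_apply, if_neg, smul_zero]
        intro hc
        have := congrArg List.length hc
        simp only [List.length_set, length_fw] at this
        omega
      · rw [if_neg (by tauto), map_zero]
  · rw [delZ, if_neg hm, tT_wd, if_neg (by tauto)]
    simp

lemma trans_del (m : ℤ) (x y : W) : phiPair (delZ m x) y = phiPair x (tT m y) := by
  have : phiPair ∘ₗ delZ m = phiPair.compl₂ (tT m) := by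
    apply wext
    intro l
    apply wext
    intro w
    simpa using trans_word m l w
  have := congrArg (fun F => F x y) this
  simpa using this

end Aux2
section Aux3

lemma pairT_tmul (f g : W →ₗ[ℚ] ℚ) (x y : W) : pairT f g (x ⊗ₜ[ℚ] y) = f x * g y := by
  simp [pairT]

lemma pairT_ext {f g f' g' : W →ₗ[ℚ] ℚ}
    (h : ∀ x y : W, f x * g y = f' x * g' y) : pairT f g = pairT f' g' := by
  apply TensorProduct.ext'
  intro x y
  rw [pairT_tmul, pairT_tmul, h]

lemma shiftT_tmul (i : ℕ) (a : List ℤ) (x : W) :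
    shiftT LinearMap.id i (wd a ⊗ₜ[ℚ] x) = wd a ⊗ₜ[ℚ] delZ ((i : ℤ) - a.length) x := by
  simp [shiftT, wd]

lemma adjA (i : ℕ) (u v : List ℤ) :
    (pairT (phiPair.flip (wd u)) (phiPair.flip (wd v))) ∘ₗ shiftT LinearMap.id i
    = pairT (phiPair.flip (wd u)) (phiPair.flip (tT ((i : ℤ) - u.length) (wd v))) := by
  apply TensorProduct.ext
  apply wext
  intro a
  apply wext
  intro b
  simp only [LinearMap.compr₂ₛₗ_apply, LinearMap.comp_apply, TensorProduct.mk_apply, shiftT_tmul, pairT_tmul,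
    LinearMap.flip_apply]
  rw [← trans_del]
  by_cases h : phiPair (wd a) (wd u) = 0
  · rw [h, zero_mul, zero_mul]
  · have hu : u = fw a := by
      rw [phiPair_ww] at h
      by_contra hc
      exact h (if_neg hc)
    have : a.length = u.length := by rw [hu]; simp
    rw [this]

lemma adjB (i : ℕ) (hi : 1 ≤ i) (u v : List ℤ) :
    (pairT (phiPair.flip (wd u)) (phiPair.flip (wd v))) ∘ₗ
      TensorProduct.map (del i) LinearMap.id
    = pairT (phiPair.flip (tT (i : ℤ) (wd u))) (phiPair.flip (wd v)) := by
  apply TensorProduct.ext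
  apply wext
  intro a
  apply wext
  intro b
  simp only [LinearMap.compr₂ₛₗ_apply, LinearMap.comp_apply, TensorProduct.mk_apply,
    TensorProduct.map_tmul, pairT_tmul, LinearMap.flip_apply, LinearMap.id_apply]
  rw [← delZ_coe i hi, trans_del]

/-- The span of nonpositive words. -/
def NSub : Submodule ℚ W := Submodule.span ℚ {x | ∃ l, NP l ∧ x = wd l}

lemma wd_mem_NSub {l : List ℤ} (h : NP l) : wd l ∈ NSub :=
  Submodule.subset_span ⟨l, h, rfl⟩

lemma funagreeN {M : Type*} [AddCommMonoid M] [Module ℚ M] (F G : W →ₗ[ℚ] M)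
    (h : ∀ l, NP l → F (wd l) = G (wd l)) : ∀ y ∈ NSub, F y = G y := by
  intro y hy
  induction hy using Submodule.span_induction with
  | mem x hx => obtain ⟨l, hl, rfl⟩ := hx; exact h l hl
  | zero => simp
  | add x y _ _ hx hy => simp [map_add, hx, hy]
  | smul c x _ hx => simp [map_smul, hx]

lemma mapN {f : W →ₗ[ℚ] W} (hf : ∀ l, NP l → f (wd l) ∈ NSub) :
    ∀ y ∈ NSub, f y ∈ NSub := by
  intro y hy
  induction hy using Submodule.span_induction with
  | mem x hx => obtain ⟨l, hl, rfl⟩ := hx; exact hf l hl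
  | zero => simp
  | add x y _ _ hx hy => simpa [map_add] using Submodule.add_mem _ hx hy
  | smul c x _ hx => simpa [map_smul] using Submodule.smul_mem _ c hx

lemma NP_set {l : List ℤ} (h : NP l) {x : ℤ} (hx : x ≤ 0) (j : ℕ) : NP (l.set j x) := by
  intro a ha
  rcases List.mem_or_eq_of_mem_set ha with h1 | rfl
  · exact h a h1
  · exact hx

lemma tT_wd_mem_NSub (m : ℤ) {v : List ℤ} (hv : NP v) : tT m (wd v) ∈ NSub := by
  rw [tT_wd]
  split
  · apply Submodule.sum_mem
    intro j _
    by_cases hj : j < v.length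
    · by_cases h0 : v.getD j 0 = 0
      · rw [h0]; simp
      · apply Submodule.smul_mem
        apply wd_mem_NSub
        apply NP_set hv _ j
        have : v.getD j 0 ≤ 0 := by
          rw [List.getD_eq_getElem v 0 hj]
          exact hv _ (List.getElem_mem hj)
        omega
    · rw [List.set_eq_of_length_le (by omega)]
      exact Submodule.smul_mem _ _ (wd_mem_NSub hv)
  · simp

lemma Jop_wd_mem_NSub {l : List ℤ} (h : NP l) : Jop (wd l) ∈ NSub := by
  cases l with
  | nil => rw [Jop_nil]; simp
  | cons a s =>
    rw [Jop_cons]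
    apply wd_mem_NSub
    intro b hb
    rcases List.mem_cons.mp hb with rfl | hb
    · have := h a (by simp)
      omega
    · exact h b (by simp [hb])

/-- The span of words of length `n`. -/
def LSub (n : ℕ) : Submodule ℚ W :=
  Submodule.span ℚ {x | ∃ l : List ℤ, l.length = n ∧ x = wd l}

lemma mem_LSub_of_coeff (y : W) (n : ℕ) (h : ∀ l, y l ≠ 0 → l.length = n) :
    y ∈ LSub n := by
  rw [← Finsupp.sum_single y]
  apply Submodule.finsuppSum_mem
  intro l hl
  have he : Finsupp.single l (y l) = (y l) • wd l := by
    rw [wd, Finsupp.smul_single', mul_one]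
  rw [he]
  exact Submodule.smul_mem _ _ (Submodule.subset_span ⟨l, h l hl, rfl⟩)

lemma proj_LSub (m : ℤ) (n : ℕ) {y : W} (hy : y ∈ LSub n) :
    proj m y = if 0 < m ∧ m ≤ (n : ℤ) then y else 0 := by
  have : proj m y = (if 0 < m ∧ m ≤ (n : ℤ) then (1 : ℚ) else 0) • y := by
    induction hy using Submodule.span_induction with
    | mem x hx =>
      obtain ⟨l, hl, rfl⟩ := hx
      rw [proj_wd, hl]
      split <;> simp
    | zero => simp
    | add x y _ _ hx hy => rw [map_add, hx, hy, smul_add]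
    | smul c x _ hx => rw [map_smul, hx, smul_comm]
  rw [this]
  split <;> simp

end Aux3
section Aux4

lemma tT_pre0_wd (m : ℤ) (l : List ℤ) :
    tT m (pre 0 (wd l)) = pre 0 (tT (m - 1) (wd l)) := by
  rw [pre_wd, tT_wd, tT_wd]
  simp only [List.length_cons]
  by_cases h1 : 0 < m
  · by_cases hl : m - 1 ≤ (l.length : ℤ)
    · rw [if_pos ⟨h1, by push_cast; omega⟩]
      by_cases hm : 0 < m - 1
      · rw [if_pos ⟨hm, hl⟩]
        have hto : m.toNat = (m - 1).toNat + 1 := by omega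
        rw [hto, Finset.sum_range_succ']
        simp only [List.getD_cons_succ, List.set_cons_succ, List.getD_cons_zero,
          List.set_cons_zero, neg_zero, Int.cast_zero, zero_smul, add_zero]
        rw [map_sum]
        refine Finset.sum_congr rfl fun j _ => ?_
        rw [map_smul, pre_wd]
      · have hm1 : m = 1 := by omega
        subst hm1
        rw [if_neg (by omega)]
        simp
    · rw [if_neg (by push_cast; omega), if_neg (by omega), map_zero]
  · rw [if_neg (by omega), if_neg (by omega), map_zero]

lemma tT_pre0 (m : ℤ) (x : W) : tT m (pre 0 x) = pre 0 (tT (m - 1) x) := by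
  have : tT m ∘ₗ pre 0 = pre 0 ∘ₗ tT (m - 1) := wext fun l => by
    simpa using tT_pre0_wd m l
  exact congrArg (fun F => F x) this

lemma tT_Jop_wd (m : ℤ) (l : List ℤ) :
    tT m (Jop (wd l)) = Jop (tT m (wd l)) + proj m (wd l) := by
  cases l with
  | nil =>
    rw [Jop_nil, map_zero, tT_wd, proj_wd, if_neg (by simp), if_neg (by simp)]
    simp
  | cons a s =>
    rw [Jop_cons, tT_wd, tT_wd, proj_wd]
    simp only [List.length_cons]
    by_cases hc : 0 < m ∧ m ≤ ((s.length + 1 : ℕ) : ℤ)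
    · rw [if_pos hc, if_pos hc, if_pos hc]
      have hto : m.toNat = (m.toNat - 1) + 1 := by omega
      rw [hto, Finset.sum_range_succ', Finset.sum_range_succ']
      rw [map_add, map_sum]
      simp only [List.getD_cons_succ, List.set_cons_succ, List.getD_cons_zero,
        List.set_cons_zero, map_smul, Jop_cons,
        show ∀ x : ℤ, x - 1 + 1 = x from fun x => by ring,
        show ∀ x : ℤ, x + 1 - 1 = x from fun x => by ring]
      have key : ((-(a - 1) : ℤ) : ℚ) • wd (a :: s)
          = ((-a : ℤ) : ℚ) • wd (a :: s) + (1 : ℚ) • wd (a :: s) := by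
        rw [← add_smul]
        congr 1
        push_cast; ring
      rw [key, one_smul]
      abel
    · rw [if_neg hc, if_neg hc, if_neg hc]
      simp

lemma tT_Jop (m : ℤ) (x : W) : tT m (Jop x) = Jop (tT m x) + proj m x := by
  have : tT m ∘ₗ Jop = Jop ∘ₗ tT m + proj m := wext fun l => by
    simpa using tT_Jop_wd m l
  exact congrArg (fun F => F x) this

lemma gdeg_cons (a : ℤ) (l : List ℤ) : gdeg (a :: l) = 1 - a + gdeg l := by
  simp [gdeg]; ring

lemma NP_gdeg_nonneg : ∀ {l : List ℤ}, NP l → 0 ≤ gdeg l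
  | [], _ => by simp [gdeg]
  | a :: t, h => by
    have ht : NP t := fun b hb => h b (by simp [hb])
    have ha : a ≤ 0 := h a (by simp)
    have := NP_gdeg_nonneg ht
    rw [gdeg_cons]; omega

lemma NP_cons_bound {a : ℤ} {t : List ℤ} (h : NP (a :: t)) : 1 ≤ gdeg (a :: t) := by
  have ht : NP t := fun b hb => h b (by simp [hb])
  have ha : a ≤ 0 := h a (by simp)
  have := NP_gdeg_nonneg ht
  rw [gdeg_cons]; omega

end Aux4
section Aux5

variable {sh : W →ₗ[ℚ] W →ₗ[ℚ] W}

lemma sh_zero_map (hsh : IsExtShuffle sh) : sh (wd [0]) = pre 0 :=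
  wext fun l => by rw [hsh.zero_mul_word, pre_wd]

lemma sh_cons0 (hsh : IsExtShuffle sh) (u' : List ℤ) (z : W) :
    sh (wd (0 :: u')) z = pre 0 (sh (wd u') z) := by
  have h1 : wd (0 :: u') = sh (wd [0]) (wd u') := (hsh.zero_mul_word u').symm
  rw [h1, hsh.assoc, sh_zero_map hsh]

lemma sh_pre0 (hsh : IsExtShuffle sh) (y z : W) : sh (pre 0 y) z = pre 0 (sh y z) := by
  have h : sh.flip z ∘ₗ pre 0 = pre 0 ∘ₗ sh.flip z := wext fun t => by
    simp only [LinearMap.comp_apply, LinearMap.flip_apply, pre_wd]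
    exact sh_cons0 hsh t z
  have := congrArg (fun F => F y) h
  simpa using this

lemma sh_mem_LSub (hsh : IsExtShuffle sh) (u v : List ℤ) :
    sh (wd u) (wd v) ∈ LSub (u.length + v.length) :=
  mem_LSub_of_coeff _ _ fun l hl => by
    by_contra hc
    exact hl (hsh.graded u v l hc)

lemma proj_sh (hsh : IsExtShuffle sh) (m : ℤ) (u v : List ℤ) :
    proj m (sh (wd u) (wd v)) =
      if 0 < m ∧ m ≤ (u.length : ℤ) + v.length then sh (wd u) (wd v) else 0 := by
  rw [proj_LSub m (u.length + v.length) (sh_mem_LSub hsh u v)]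
  have : ((u.length + v.length : ℕ) : ℤ) = (u.length : ℤ) + v.length := by push_cast; ring
  rw [this]

lemma pre0_mem_NSub : ∀ y ∈ NSub, pre 0 y ∈ NSub :=
  mapN fun l hl => by
    rw [pre_wd]
    apply wd_mem_NSub
    intro b hb
    rcases List.mem_cons.mp hb with rfl | hb
    · exact le_refl 0
    · exact hl b hb

lemma Jop_mem_NSub : ∀ y ∈ NSub, Jop y ∈ NSub :=
  mapN fun l hl => Jop_wd_mem_NSub hl

lemma NP_tail {a : ℤ} {t : List ℤ} (h : NP (a :: t)) : NP t :=
  fun b hb => h b (by simp [hb])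

lemma NP_head {a : ℤ} {t : List ℤ} (h : NP (a :: t)) : a ≤ 0 := h a (by simp)

lemma NP_cons {a : ℤ} (ha : a ≤ 0) {t : List ℤ} (h : NP t) : NP (a :: t) := by
  intro b hb
  rcases List.mem_cons.mp hb with rfl | hb
  · exact ha
  · exact h b hb

lemma Jop_cons_word {a : ℤ} (u' : List ℤ) : Jop (wd ((a + 1) :: u')) = wd (a :: u') := by
  rw [Jop_cons, show a + 1 - 1 = a from by ring]

lemma sh_mem_NSub (hsh : IsExtShuffle sh) :
    ∀ n : ℕ, ∀ u : List ℤ, NP u → gdeg u ≤ (n : ℤ) → ∀ v : List ℤ, NP v →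
      sh (wd u) (wd v) ∈ NSub := by
  intro n
  induction n with
  | zero =>
    intro u hu hg v hv
    cases u with
    | nil => rw [hsh.one_mul]; exact wd_mem_NSub hv
    | cons a t => exact absurd (NP_cons_bound hu) (by push_cast at hg; omega)
  | succ n ih =>
    intro u hu hg v hv
    cases u with
    | nil => rw [hsh.one_mul]; exact wd_mem_NSub hv
    | cons a u' =>
      have hu' : NP u' := NP_tail hu
      have ha : a ≤ 0 := NP_head hu
      by_cases h0 : a = 0
      · subst h0
        rw [sh_cons0 hsh]
        apply pre0_mem_NSub
        apply ih u' hu' (by rw [gdeg_cons] at hg; push_cast at hg ⊢; omega) v hv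
      · have hX : NP ((a + 1) :: u') := NP_cons (by omega) hu'
        have hgX : gdeg ((a + 1) :: u') ≤ (n : ℤ) := by
          rw [gdeg_cons] at hg ⊢; push_cast at hg ⊢; omega
        have hL : sh (wd (a :: u')) (wd v)
            = Jop (sh (wd ((a + 1) :: u')) (wd v)) - sh (wd ((a + 1) :: u')) (Jop (wd v)) := by
          rw [hsh.leibniz, Jop_cons_word]
          abel
        rw [hL]
        apply Submodule.sub_mem
        · exact Jop_mem_NSub _ (ih _ hX hgX v hv)
        · cases v with
          | nil => rw [Jop_nil, map_zero]; exact Submodule.zero_mem _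
          | cons b v' =>
            rw [Jop_cons]
            exact ih _ hX hgX _ (NP_cons (by have := NP_head hv; omega) (NP_tail hv))

end Aux5
section Aux6

variable {sh : W →ₗ[ℚ] W →ₗ[ℚ] W}

/-- Key lemma: `δ̃` is a shifted derivation for the extended shuffle. -/
lemma key (hsh : IsExtShuffle sh) :
    ∀ n : ℕ, ∀ u : List ℤ, NP u → gdeg u ≤ (n : ℤ) → ∀ v : List ℤ, NP v → ∀ m : ℤ,
      tT m (sh (wd u) (wd v))
        = sh (tT m (wd u)) (wd v) + sh (wd u) (tT (m - u.length) (wd v)) := by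
  have base : ∀ v : List ℤ, ∀ m : ℤ,
      tT m (sh (wd []) (wd v)) = sh (tT m (wd [])) (wd v)
        + sh (wd []) (tT (m - (List.length ([] : List ℤ) : ℤ)) (wd v)) := by
    intro v m
    have h0 : tT m (wd ([] : List ℤ)) = 0 := by rw [tT_wd]; simp
    rw [hsh.one_mul, h0, map_zero, LinearMap.zero_apply, hsh.one_mul]
    simp
  intro n
  induction n with
  | zero =>
    intro u hu hg v hv m
    cases u with
    | nil => exact base v m
    | cons a t => exact absurd (NP_cons_bound hu) (by push_cast at hg; omega)
  | succ n ih =>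
    intro u hu hg v hv m
    cases u with
    | nil => exact base v m
    | cons a u' =>
      have hu' : NP u' := NP_tail hu
      have ha : a ≤ 0 := NP_head hu
      simp only [List.length_cons]
      by_cases h0 : a = 0
      · subst h0
        have hg' : gdeg u' ≤ (n : ℤ) := by rw [gdeg_cons] at hg; push_cast at hg ⊢; omega
        have em : m - ((u'.length + 1 : ℕ) : ℤ) = m - 1 - u'.length := by push_cast; ring
        rw [em]
        have e1 : tT m (wd (0 :: u')) = pre 0 (tT (m - 1) (wd u')) := by
          rw [← pre_wd, tT_pre0]
        calc tT m (sh (wd (0 :: u')) (wd v))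
            = tT m (pre 0 (sh (wd u') (wd v))) := by rw [sh_cons0 hsh]
          _ = pre 0 (tT (m - 1) (sh (wd u') (wd v))) := tT_pre0 ..
          _ = pre 0 (sh (tT (m - 1) (wd u')) (wd v))
              + pre 0 (sh (wd u') (tT (m - 1 - u'.length) (wd v))) := by
                rw [ih u' hu' hg' v hv (m - 1), map_add]
          _ = sh (tT m (wd (0 :: u'))) (wd v)
              + sh (wd (0 :: u')) (tT (m - 1 - u'.length) (wd v)) := by
                rw [e1, sh_pre0 hsh, ← sh_cons0 hsh]
      · -- a < 0
        have hX : NP ((a + 1) :: u') := NP_cons (by omega) hu'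
        have hgX : gdeg ((a + 1) :: u') ≤ (n : ℤ) := by
          rw [gdeg_cons] at hg ⊢; push_cast at hg ⊢; omega
        have hJX : Jop (wd ((a + 1) :: u')) = wd (a :: u') := Jop_cons_word u'
        have hLb : sh (wd (a :: u')) (wd v)
            = Jop (sh (wd ((a + 1) :: u')) (wd v)) - sh (wd ((a + 1) :: u')) (Jop (wd v)) := by
          have h := hsh.leibniz (wd ((a + 1) :: u')) (wd v)
          rw [hJX] at h
          rw [h]; abel
        have IH1 := ih _ hX hgX v hv m
        simp only [List.length_cons] at IH1
        have IH2 : tT m (sh (wd ((a + 1) :: u')) (Jop (wd v)))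
            = sh (tT m (wd ((a + 1) :: u'))) (Jop (wd v))
              + sh (wd ((a + 1) :: u')) (tT (m - ((u'.length + 1 : ℕ) : ℤ)) (Jop (wd v))) := by
          cases v with
          | nil => rw [Jop_nil]; simp
          | cons b v' =>
            rw [Jop_cons]
            have := ih _ hX hgX ((b - 1) :: v')
              (NP_cons (by have := NP_head hv; omega) (NP_tail hv)) m
            simpa only [List.length_cons] using this
        have hswap : Jop (tT (m - ((u'.length + 1 : ℕ) : ℤ)) (wd v))
            = tT (m - ((u'.length + 1 : ℕ) : ℤ)) (Jop (wd v))
              - proj (m - ((u'.length + 1 : ℕ) : ℤ)) (wd v) := by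
          rw [tT_Jop]; abel
        have hU : tT m (wd (a :: u'))
            = Jop (tT m (wd ((a + 1) :: u'))) + proj m (wd ((a + 1) :: u')) := by
          rw [← hJX, tT_Jop]
        have hproj : proj m (sh (wd ((a + 1) :: u')) (wd v))
            = sh (proj m (wd ((a + 1) :: u'))) (wd v)
              + sh (wd ((a + 1) :: u')) (proj (m - ((u'.length + 1 : ℕ) : ℤ)) (wd v)) := by
          rw [proj_sh hsh, proj_wd, proj_wd]
          simp only [List.length_cons]
          by_cases c1 : 0 < m ∧ m ≤ ((u'.length + 1 : ℕ) : ℤ)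
          · rw [if_pos (by push_cast at c1 ⊢; omega), if_pos c1,
              if_neg (by push_cast at c1 ⊢; omega)]
            rw [map_zero, add_zero]
          · by_cases c2 : 0 < m - ((u'.length + 1 : ℕ) : ℤ)
                ∧ m - ((u'.length + 1 : ℕ) : ℤ) ≤ (v.length : ℤ)
            · rw [if_pos (by push_cast at c2 ⊢; omega), if_neg c1, if_pos c2]
              rw [map_zero, LinearMap.zero_apply, zero_add]
            · rw [if_neg (by push_cast at c1 c2 ⊢; omega), if_neg c1, if_neg c2]
              rw [map_zero, LinearMap.zero_apply, map_zero, add_zero]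
        rw [hLb, map_sub, tT_Jop, IH1, IH2, map_add,
          hsh.leibniz (tT m (wd ((a + 1) :: u'))) (wd v),
          hsh.leibniz (wd ((a + 1) :: u')) (tT (m - ((u'.length + 1 : ℕ) : ℤ)) (wd v)),
          hJX, hswap, map_sub, hU, map_add, LinearMap.add_apply, hproj]
        abel
end Aux6
section Aux7

variable {sh : W →ₗ[ℚ] W →ₗ[ℚ] W}

lemma Jop_coeff0 (k : ℕ) : ∀ y ∈ NSub, (Jop y) (List.replicate k 0) = 0 := by
  apply funagreeN (Finsupp.lapply (List.replicate k 0) ∘ₗ Jop) 0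
  intro l hl
  simp only [LinearMap.comp_apply, Finsupp.lapply_apply, LinearMap.zero_apply,
    Finsupp.coe_zero, Pi.zero_apply]
  cases l with
  | nil => rw [Jop_nil]; simp
  | cons c w =>
    rw [Jop_cons, wd_apply, if_neg]
    intro hc
    cases k with
    | zero => simp at hc
    | succ k' =>
      rw [List.replicate_succ] at hc
      have h1 : c - 1 = 0 := (List.cons.injEq _ _ _ _ ▸ hc).1
      have := NP_head hl
      omega

lemma pre0_coeff_nil (y : W) : (pre 0 y) ([] : List ℤ) = 0 := by
  apply Finsupp.mapDomain_notin_range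
  rintro ⟨l, hl⟩
  cases hl

lemma pre0_coeff_cons (y : W) (l : List ℤ) : (pre 0 y) (0 :: l) = y l :=
  Finsupp.mapDomain_apply (fun _ _ h => (List.cons.injEq _ _ _ _ ▸ h).2) y l

lemma coeff0 (hsh : IsExtShuffle sh) :
    ∀ n : ℕ, ∀ u : List ℤ, NP u → gdeg u ≤ (n : ℤ) → ∀ v : List ℤ, NP v → ∀ k : ℕ,
      (sh (wd u) (wd v)) (List.replicate k 0)
        = if u = List.replicate u.length 0 ∧ v = List.replicate v.length 0
            ∧ u.length + v.length = k then 1 else 0 := by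
  have base : ∀ (v : List ℤ) (k : ℕ), (sh (wd []) (wd v)) (List.replicate k 0)
      = if ([] : List ℤ) = List.replicate (List.length ([] : List ℤ)) 0
          ∧ v = List.replicate v.length 0 ∧ List.length ([] : List ℤ) + v.length = k
        then 1 else 0 := by
    intro v k
    rw [hsh.one_mul, wd_apply]
    simp only [List.length_nil, List.replicate_zero, true_and, Nat.zero_add]
    by_cases hv : v = List.replicate k 0
    · rw [if_pos hv, if_pos]
      constructor
      · rw [hv]; simp
      · rw [hv]; simp
    · rw [if_neg hv, if_neg]
      rintro ⟨h1, h2⟩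
      exact hv (by rw [h1, h2])
  intro n
  induction n with
  | zero =>
    intro u hu hg v hv k
    cases u with
    | nil => exact base v k
    | cons a t => exact absurd (NP_cons_bound hu) (by push_cast at hg; omega)
  | succ n ih =>
    intro u hu hg v hv k
    cases u with
    | nil => exact base v k
    | cons a u' =>
      have hu' : NP u' := NP_tail hu
      have ha : a ≤ 0 := NP_head hu
      by_cases h0 : a = 0
      · subst h0
        have hg' : gdeg u' ≤ (n : ℤ) := by rw [gdeg_cons] at hg; push_cast at hg ⊢; omega
        rw [sh_cons0 hsh]
        cases k with
        | zero =>
          rw [List.replicate_zero, pre0_coeff_nil, if_neg]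
          rintro ⟨-, -, h3⟩
          simp at h3
        | succ k' =>
          rw [List.replicate_succ, pre0_coeff_cons, ih u' hu' hg' v hv k']
          have hiff : (u' = List.replicate u'.length 0 ∧ v = List.replicate v.length 0
                ∧ u'.length + v.length = k')
              ↔ ((0 :: u') = List.replicate (0 :: u').length 0
                ∧ v = List.replicate v.length 0 ∧ (0 :: u').length + v.length = k' + 1) := by
            simp only [List.length_cons, List.replicate_succ, List.cons.injEq, true_and]
            constructor
            · rintro ⟨h1, h2, h3⟩; exact ⟨h1, h2, by omega⟩
            · rintro ⟨h1, h2, h3⟩; exact ⟨h1, h2, by omega⟩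
          rw [if_congr hiff rfl rfl]
      · -- a < 0
        have hX : NP ((a + 1) :: u') := NP_cons (by omega) hu'
        have hgX : gdeg ((a + 1) :: u') ≤ (n : ℤ) := by
          rw [gdeg_cons] at hg ⊢; push_cast at hg ⊢; omega
        have hJX : Jop (wd ((a + 1) :: u')) = wd (a :: u') := Jop_cons_word u'
        have hLb : sh (wd (a :: u')) (wd v)
            = Jop (sh (wd ((a + 1) :: u')) (wd v)) - sh (wd ((a + 1) :: u')) (Jop (wd v)) := by
          have h := hsh.leibniz (wd ((a + 1) :: u')) (wd v)
          rw [hJX] at h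
          rw [h]; abel
        rw [hLb]
        rw [Finsupp.sub_apply]
        have h1 : (Jop (sh (wd ((a + 1) :: u')) (wd v))) (List.replicate k 0) = 0 :=
          Jop_coeff0 k _ (sh_mem_NSub hsh n _ hX hgX v hv)
        have h2 : (sh (wd ((a + 1) :: u')) (Jop (wd v))) (List.replicate k 0) = 0 := by
          cases v with
          | nil => rw [Jop_nil]; simp
          | cons b v' =>
            rw [Jop_cons]
            rw [ih _ hX hgX ((b - 1) :: v')
              (NP_cons (by have := NP_head hv; omega) (NP_tail hv)) k]
            rw [if_neg]
            rintro ⟨-, h2, -⟩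
            rw [List.length_cons, List.replicate_succ] at h2
            have hb1 : b - 1 = 0 := (List.cons.injEq _ _ _ _ ▸ h2).1
            have := NP_head hv
            omega
        rw [h1, h2, if_neg]
        · ring
        · rintro ⟨h1', -, -⟩
          rw [List.length_cons, List.replicate_succ] at h1'
          exact h0 ((List.cons.injEq _ _ _ _ ▸ h1').1)

end Aux7
section Aux8

variable {sh : W →ₗ[ℚ] W →ₗ[ℚ] W}

lemma pairT_zero_right (f : W →ₗ[ℚ] ℚ) : pairT f 0 = 0 :=
  TensorProduct.ext' fun x y => by simp [pairT_tmul]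

lemma pairT_zero_left (g : W →ₗ[ℚ] ℚ) : pairT 0 g = 0 :=
  TensorProduct.ext' fun x y => by simp [pairT_tmul]

lemma pairT_add_right (f g1 g2 : W →ₗ[ℚ] ℚ) : pairT f (g1 + g2) = pairT f g1 + pairT f g2 :=
  TensorProduct.ext' fun x y => by
    simp [pairT_tmul, LinearMap.add_apply]; ring

lemma pairT_add_left (f1 f2 g : W →ₗ[ℚ] ℚ) : pairT (f1 + f2) g = pairT f1 g + pairT f2 g :=
  TensorProduct.ext' fun x y => by
    simp [pairT_tmul, LinearMap.add_apply]; ring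

lemma pairT_smul_right (f : W →ₗ[ℚ] ℚ) (c : ℚ) (g : W →ₗ[ℚ] ℚ) :
    pairT f (c • g) = c • pairT f g :=
  TensorProduct.ext' fun x y => by
    simp [pairT_tmul, LinearMap.smul_apply]; ring

lemma pairT_smul_left (f : W →ₗ[ℚ] ℚ) (c : ℚ) (g : W →ₗ[ℚ] ℚ) :
    pairT (c • f) g = c • pairT f g :=
  TensorProduct.ext' fun x y => by
    simp [pairT_tmul, LinearMap.smul_apply]; ring

lemma IHext (D : W →ₗ[ℚ] W ⊗[ℚ] W) (s' : List ℤ)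
    (hIH : ∀ u v : List ℤ, NP u → NP v →
      pairT (phiPair.flip (wd u)) (phiPair.flip (wd v)) (D (wd s'))
        = phiPair (wd s') (sh (wd u) (wd v))) :
    ∀ y ∈ NSub, ∀ z ∈ NSub,
      pairT (phiPair.flip y) (phiPair.flip z) (D (wd s'))
        = phiPair (wd s') (sh y z) := by
  intro y hy
  induction hy using Submodule.span_induction with
  | mem x hx =>
    obtain ⟨u, hu, rfl⟩ := hx
    intro z hz
    induction hz using Submodule.span_induction with
    | mem w hw => obtain ⟨v, hv, rfl⟩ := hw; exact hIH u v hu hv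
    | zero => simp [pairT_zero_right]
    | add z1 z2 _ _ h1 h2 =>
      rw [map_add, pairT_add_right, LinearMap.add_apply, h1, h2, map_add, map_add]
    | smul c z _ h1 =>
      rw [map_smul, pairT_smul_right, LinearMap.smul_apply, h1, map_smul, map_smul]
  | zero => intro z hz; simp [pairT_zero_left]
  | add y1 y2 _ _ h1 h2 =>
    intro z hz
    rw [map_add, pairT_add_left, LinearMap.add_apply, h1 z hz, h2 z hz, map_add,
      LinearMap.add_apply, map_add]
  | smul c y1 _ h1 =>
    intro z hz
    rw [map_smul, pairT_smul_left, LinearMap.smul_apply, h1 z hz, map_smul,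
      LinearMap.smul_apply, map_smul]

lemma mainBase (hsh : IsExtShuffle sh) (D : W →ₗ[ℚ] W ⊗[ℚ] W)
    (hDk : ∀ k : ℕ, D (wd (List.replicate k (1 : ℤ)))
      = ∑ j ∈ Finset.range (k + 1),
          wd (List.replicate j (1 : ℤ)) ⊗ₜ[ℚ] wd (List.replicate (k - j) (1 : ℤ)))
    (k : ℕ) (u v : List ℤ) (hu : NP u) (hv : NP v) :
    pairT (phiPair.flip (wd u)) (phiPair.flip (wd v)) (D (wd (List.replicate k 1)))
      = phiPair (wd (List.replicate k 1)) (sh (wd u) (wd v)) := by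
  have hfw : ∀ j : ℕ, fw (List.replicate j (1 : ℤ)) = List.replicate j 0 := fun j => by
    simp [fw, List.map_replicate]
  rw [hDk k, map_sum, phiPair_wd, hfw,
    coeff0 hsh (gdeg u).toNat u hu (Int.self_le_toNat _) v hv k]
  simp only [pairT_tmul, LinearMap.flip_apply, phiPair_ww, hfw]
  by_cases hc : u = List.replicate u.length 0 ∧ v = List.replicate v.length 0
      ∧ u.length + v.length = k
  · rw [if_pos hc]
    obtain ⟨h1, h2, h3⟩ := hc
    rw [Finset.sum_eq_single u.length]
    · have hv2 : v = List.replicate (k - u.length) 0 := by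
        have hlen : v.length = k - u.length := by omega
        rw [← hlen]
        exact h2
      rw [if_pos h1, if_pos hv2]
      norm_num
    · intro j _ hne
      rw [if_neg, zero_mul]
      intro hcu
      exact hne (by simp [hcu])
    · intro hmem
      exact absurd (Finset.mem_range.mpr (by omega)) hmem
  · rw [if_neg hc]
    apply Finset.sum_eq_zero
    intro j hj
    by_cases h1 : u = List.replicate j 0
    · by_cases h2 : v = List.replicate (k - j) 0
      · exfalso
        apply hc
        have hlu : u.length = j := by rw [h1]; simp
        have hlv : v.length = k - j := by rw [h2]; simp
        rw [Finset.mem_range] at hj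
        exact ⟨by rw [hlu]; exact h1, by rw [hlv]; exact h2, by omega⟩
      · rw [if_neg h2, mul_zero]
    · rw [if_neg h1, zero_mul]

end Aux8
section Aux9

variable {sh : W →ₗ[ℚ] W →ₗ[ℚ] W}

lemma sum_of_ones : ∀ {s : List ℤ}, (∀ x ∈ s, x = 1) → s.sum = (s.length : ℤ)
  | [], _ => by simp
  | a :: t, h => by
    have ha : a = 1 := h a (by simp)
    have ht := sum_of_ones (fun x hx => h x (List.mem_cons_of_mem a hx))
    simp only [List.sum_cons, List.length_cons, ha, ht]
    push_cast; ring

lemma pos_len_le_sum : ∀ {s : List ℤ}, Pos s → (s.length : ℤ) ≤ s.sum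
  | [], _ => by simp
  | a :: t, h => by
    have ha : 1 ≤ a := h a (by simp)
    have ht := pos_len_le_sum (fun x hx => h x (List.mem_cons_of_mem a hx))
    simp only [List.sum_cons, List.length_cons]
    push_cast; omega

lemma pos_all_one : ∀ {s : List ℤ}, Pos s → s.sum ≤ (s.length : ℤ) → ∀ x ∈ s, x = 1
  | [], _, _ => by simp
  | a :: t, h, hb => by
    have ha : 1 ≤ a := h a (by simp)
    have hpt : Pos t := fun x hx => h x (List.mem_cons_of_mem a hx)
    have h1 := pos_len_le_sum hpt
    simp only [List.sum_cons, List.length_cons] at hb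
    push_cast at hb
    intro x hx
    rcases List.mem_cons.mp hx with rfl | hx
    · omega
    · exact pos_all_one hpt (by omega) x hx

lemma pos_eq_replicate {s : List ℤ} (h : Pos s) (hb : s.sum ≤ (s.length : ℤ)) :
    s = List.replicate s.length 1 :=
  List.eq_replicate_length.mpr (pos_all_one h hb)

lemma mainAux (hsh : IsExtShuffle sh) (D : W →ₗ[ℚ] W ⊗[ℚ] W)
    (hDk : ∀ k : ℕ, D (wd (List.replicate k (1 : ℤ)))
      = ∑ j ∈ Finset.range (k + 1),
          wd (List.replicate j (1 : ℤ)) ⊗ₜ[ℚ] wd (List.replicate (k - j) (1 : ℤ)))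
    (hDcod : ∀ i : ℕ, 1 ≤ i → ∀ l : List ℤ, Pos l →
      (shiftT LinearMap.id i + TensorProduct.map (del i) LinearMap.id :
        W ⊗[ℚ] W →ₗ[ℚ] W ⊗[ℚ] W) (D (wd l)) = D (del i (wd l))) :
    ∀ e : ℕ, ∀ s : List ℤ, Pos s → s.sum ≤ (s.length : ℤ) + e →
      ∀ u v : List ℤ, NP u → NP v →
        pairT (phiPair.flip (wd u)) (phiPair.flip (wd v)) (D (wd s))
          = phiPair (wd s) (sh (wd u) (wd v)) := by
  intro e
  induction e with
  | zero =>
    intro s hs hsum u v hu hv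
    have hk : s = List.replicate s.length 1 :=
      pos_eq_replicate hs (by push_cast at hsum; omega)
    rw [hk]
    exact mainBase hsh D hDk s.length u v hu hv
  | succ e ihe =>
    suffices h : ∀ j : ℕ, ∀ s : List ℤ, Pos s → s.sum ≤ (s.length : ℤ) + (e + 1 : ℕ) →
        s.findIdx (fun a => decide (2 ≤ a)) ≤ j → ∀ u v : List ℤ, NP u → NP v →
          pairT (phiPair.flip (wd u)) (phiPair.flip (wd v)) (D (wd s))
            = phiPair (wd s) (sh (wd u) (wd v)) by
      intro s hs hsum u v hu hv
      exact h (s.findIdx (fun a => decide (2 ≤ a))) s hs hsum le_rfl u v hu hv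
    intro j
    induction j using Nat.strong_induction_on with
    | _ j ihj =>
    intro s hs hsum hple u v hu hv
    by_cases hsmall : s.sum ≤ (s.length : ℤ) + e
    · exact ihe s hs hsmall u v hu hv
    · push_cast at hsum
      have hsum1 : s.sum = (s.length : ℤ) + e + 1 := by omega
      have hex : ∃ x ∈ s, (fun a => decide (2 ≤ a)) x = true := by
        by_contra hno
        push_neg at hno
        have hall : ∀ x ∈ s, x = 1 := by
          intro x hx
          have h1 := hs x hx
          have h2 := hno x hx
          simp at h2
          omega
        have := sum_of_ones hall
        omega
      have hjj : s.findIdx (fun a => decide (2 ≤ a)) < s.length :=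
        List.findIdx_lt_length.mpr hex
      set jj := s.findIdx (fun a => decide (2 ≤ a)) with hjjdef
      have h2 : 2 ≤ s.getD jj 0 := by
        have hp := @List.findIdx_getElem _ (fun a => decide (2 ≤ a)) s hjj
        rw [List.getD_eq_getElem s 0 hjj]
        simpa using hp
      have hones : ∀ t, t < jj → s.getD t 0 = 1 := by
        intro t ht
        have htl : t < s.length := lt_trans ht hjj
        have hnp := List.not_of_lt_findIdx (p := fun a => decide (2 ≤ a)) (xs := s) ht
        rw [List.getD_eq_getElem s 0 htl]
        simp only [decide_eq_false_iff_not, not_le] at hnp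
        have := hs (s[t]) (List.getElem_mem htl)
        omega
      set sj := s.getD jj 0 with hsjdef
      set s' := s.set jj (sj - 1) with hs'def
      have hlen' : s'.length = s.length := by rw [hs'def]; simp
      have hPos' : Pos s' := by
        intro x hx
        rcases List.mem_or_eq_of_mem_set hx with hmem | rfl
        · exact hs x hmem
        · omega
      have hsum2 : s'.sum = s.sum - 1 := by
        rw [hs'def, sum_set s jj hjj]
        omega
      have houter : s'.sum ≤ (s'.length : ℤ) + e := by
        rw [hsum2, hlen']; omega
      have hstep : pairT (phiPair.flip (wd u)) (phiPair.flip (wd v)) (D (del (jj+1) (wd s')))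
          = phiPair (del (jj+1) (wd s')) (sh (wd u) (wd v)) := by
        rw [← hDcod (jj+1) (by omega) s' hPos', LinearMap.add_apply, map_add]
        have hA := congrArg (fun F => F (D (wd s'))) (adjA (jj+1) u v)
        have hB := congrArg (fun F => F (D (wd s'))) (adjB (jj+1) (by omega) u v)
        simp only [LinearMap.comp_apply] at hA hB
        rw [hA, hB]
        have hxt := IHext D s' (fun u' v' hu' hv' => ihe s' hPos' houter u' v' hu' hv')
        rw [hxt (wd u) (wd_mem_NSub hu) _ (tT_wd_mem_NSub _ hv),
            hxt _ (tT_wd_mem_NSub _ hu) (wd v) (wd_mem_NSub hv),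
            ← map_add]
        have hkey := key hsh (gdeg u).toNat u hu (Int.self_le_toNat _) v hv ((jj+1 : ℕ) : ℤ)
        rw [show sh (wd u) (tT (((jj+1 : ℕ) : ℤ) - u.length) (wd v))
              + sh (tT ((jj+1 : ℕ) : ℤ) (wd u)) (wd v)
            = tT ((jj+1 : ℕ) : ℤ) (sh (wd u) (wd v)) from by rw [hkey]; abel,
          ← trans_del, delZ_coe (jj+1) (by omega)]
      have hii : jj + 1 ≤ s'.length := by omega
      have hexp : del (jj+1) (wd s')
          = (∑ m ∈ Finset.range jj,
              ((s'.getD m 0 : ℤ) : ℚ) • wd (s'.set m (s'.getD m 0 + 1)))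
            + ((s'.getD jj 0 : ℤ) : ℚ) • wd (s'.set jj (s'.getD jj 0 + 1)) := by
        rw [del_wd, if_pos hii, Finset.sum_range_succ]
      have hgjj : s'.getD jj 0 = sj - 1 := getD_set_self hjj _
      have hword : s'.set jj (s'.getD jj 0 + 1) = s := by
        rw [hgjj, show sj - 1 + 1 = sj from by ring, hs'def, List.set_set, hsjdef,
          set_getD_self hjj]
      rw [hexp, hword, hgjj] at hstep
      simp only [map_add, map_smul, map_sum, LinearMap.add_apply, LinearMap.smul_apply,
        LinearMap.sum_apply] at hstep
      have hterm : ∀ m ∈ Finset.range jj,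
          ((s'.getD m 0 : ℤ) : ℚ)
              • pairT (phiPair.flip (wd u)) (phiPair.flip (wd v))
                  (D (wd (s'.set m (s'.getD m 0 + 1))))
          = ((s'.getD m 0 : ℤ) : ℚ)
              • phiPair (wd (s'.set m (s'.getD m 0 + 1))) (sh (wd u) (wd v)) := by
        intro m hm
        rw [Finset.mem_range] at hm
        congr 1
        have hm' : s'.getD m 0 = 1 := by
          rw [hs'def, getD_set_ne (by omega)]
          exact hones m hm
        have hmlt : m < s'.length := by omega
        have hrlen : (s'.set m (s'.getD m 0 + 1)).length = s.length := by
          rw [List.length_set, hlen']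
        have hrpos : Pos (s'.set m (s'.getD m 0 + 1)) := by
          intro x hx
          rcases List.mem_or_eq_of_mem_set hx with hmem | rfl
          · exact hPos' x hmem
          · omega
        have hrsum : (s'.set m (s'.getD m 0 + 1)).sum = s.sum := by
          rw [sum_set s' m hmlt, hsum2]
          ring
        have hrfb : (s'.set m (s'.getD m 0 + 1)).findIdx (fun a => decide (2 ≤ a)) = m := by
          rw [List.findIdx_eq (by omega)]
          constructor
          · simp only [decide_eq_true_eq]
            rw [← List.getD_eq_getElem _ 0 (by omega), getD_set_self hmlt, hm']
            norm_num
          · intro t htm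
            have hg : (s'.set m (s'.getD m 0 + 1)).getD t 0 = 1 := by
              rw [getD_set_ne (by omega), hs'def, getD_set_ne (by omega)]
              exact hones t (by omega)
            simp only [decide_eq_false_iff_not, not_le]
            rw [← List.getD_eq_getElem _ 0 (by omega), hg]
            norm_num
        exact ihj m (by omega) _ hrpos (by rw [hrlen]; push_cast; omega)
          (le_of_eq hrfb) u v hu hv
      rw [Finset.sum_congr rfl hterm] at hstep
      have hcancel := add_left_cancel hstep
      have hc0 : ((sj - 1 : ℤ) : ℚ) ≠ 0 := by
        rw [Int.cast_ne_zero]; omega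
      exact mul_left_cancel₀ hc0 (by simpa [smul_eq_mul] using hcancel)

end Aux9
/-- `Δ_{≥1} = (φ⁻¹ ⊗ φ⁻¹) ∘ ⧢_{≤0}* ∘ φ`; equivalently
`(φ ⊗ φ) Δ_{≥1} = ⧢_{≤0}* φ`, so the Riemann duality map `φ` is a coalgebra isomorphism
`(H_{≥1}, Δ_{≥1}, ε_{≥1}) → (H_{≤0}^✻, ⧢_{≤0}*, u_{≤0}*)`.  Both sides are evaluated through
the pairing `phiPair x y = (φ x)(y)`. -/
theorem Dge1_eq_dual_shuffle
    (sh : W →ₗ[ℚ] W →ₗ[ℚ] W) (hsh : IsExtShuffle sh)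
    (D : W →ₗ[ℚ] W ⊗[ℚ] W)
    (hD1 : D (wd []) = wd [] ⊗ₜ[ℚ] wd [])
    (hDk : ∀ k : ℕ, D (wd (List.replicate k (1 : ℤ)))
      = ∑ j ∈ Finset.range (k + 1),
          wd (List.replicate j (1 : ℤ)) ⊗ₜ[ℚ] wd (List.replicate (k - j) (1 : ℤ)))
    (hDcod : ∀ i : ℕ, 1 ≤ i → ∀ l : List ℤ, Pos l →
      (shiftT LinearMap.id i + TensorProduct.map (del i) LinearMap.id :
        W ⊗[ℚ] W →ₗ[ℚ] W ⊗[ℚ] W) (D (wd l)) = D (del i (wd l)))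
 :
    -- `(φ ⊗ φ) Δ_{≥1} = ⧢_{≤0}* φ`
    (∀ s : List ℤ, Pos s → ∀ u v : List ℤ, NP u → NP v →
      pairT (phiPair.flip (wd u)) (phiPair.flip (wd v)) (D (wd s))
        = phiPair (wd s) (sh (wd u) (wd v)))
    -- `φ` preserves the counit: `u_{≤0}* ∘ φ = ε_{≥1}`
    ∧ (∀ s : List ℤ, Pos s → phiPair (wd s) (wd []) = eps (wd s)) := by
  constructor
  · intro s hs u v hu hv
    exact mainAux hsh D hDk hDcod (s.sum - s.length).toNat s hs
      (by have := Int.self_le_toNat (s.sum - s.length); omega) u v hu hv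
  · intro s _
    rw [phiPair_ww, eps_wd]
    by_cases h : s = []
    · subst h
      rw [if_pos (by rfl), if_pos rfl]
    · rw [if_neg h, if_neg]
      intro hc
      apply h
      have hlen := congrArg List.length hc
      rw [List.length_nil, length_fw] at hlen
      exact List.length_eq_zero_iff.mp hlen.symm

end
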